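/- Let p be an odd prime, G = E_p(p^3), and f₁, f₂ the standard generating 2-cocycles of H²(G, Q/Z). For 1 ≤ i ≤ p−1 and the subgroup H_i' = ⟨a b^i, c⟩ ≅ (C_p)², the kernel of the restriction map H²(G, Q/Z) → H²(H_i', Q/Z) is the cyclic group of order p generated by the class of f₁ · f₂^{(−1)·i^{−1}}, where i^{−1} is the inverse of i mod p. -/

import Mathlib

/-- The Heisenberg group `G = E_p(p³) = ⟨a,b,c ∣ aᵖ = bᵖ = cᵖ = 1, [b,a] = c, [c,a] = [c,b] = 1⟩`
(the extraspecial group of order `p³` and exponent `p`, for odd `p`): every element has a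
unique normal form `a^s b^t c^u`, and we encode it as the triple `(s, t, u)`; the relations
give `b^t a^s = a^s b^t c^{t s}`, whence the multiplication rule below. -/
@[ext] structure Heis (p : ℕ) where
  s : ZMod p
  t : ZMod p
  u : ZMod p

namespace Heis

variable {p : ℕ}

instance : Group (Heis p) where
  mul x y := ⟨x.s + y.s, x.t + y.t, x.u + y.u + x.t * y.s⟩
  one := ⟨0, 0, 0⟩
  inv x := ⟨-x.s, -x.t, -x.u + x.t * x.s⟩
  mul_assoc x y z := by
    refine Heis.ext (add_assoc _ _ _) (add_assoc _ _ _) ?_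
    show x.u + y.u + x.t * y.s + z.u + (x.t + y.t) * z.s
       = x.u + (y.u + z.u + y.t * z.s) + x.t * (y.s + z.s)
    ring
  one_mul x := by
    refine Heis.ext (zero_add _) (zero_add _) ?_
    show 0 + x.u + 0 * x.s = x.u; ring
  mul_one x := by
    refine Heis.ext (add_zero _) (add_zero _) ?_
    show x.u + 0 + x.t * 0 = x.u; ring
  inv_mul_cancel x := by
    refine Heis.ext (neg_add_cancel _) (neg_add_cancel _) ?_
    show -x.u + x.t * x.s + x.u + -x.t * x.s = 0; ring

@[simp] lemma mul_def (x y : Heis p) :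
    x * y = ⟨x.s + y.s, x.t + y.t, x.u + y.u + x.t * y.s⟩ := rfl

@[simp] lemma one_def : (1 : Heis p) = ⟨0, 0, 0⟩ := rfl

@[simp] lemma inv_def (x : Heis p) : x⁻¹ = ⟨-x.s, -x.t, -x.u + x.t * x.s⟩ := rfl

/-- The generator `a`. -/
def a : Heis p := ⟨1, 0, 0⟩
/-- The generator `b`. -/
def b : Heis p := ⟨0, 1, 0⟩
/-- The generator `c = [b,a] = b⁻¹a⁻¹ba`. -/
def c : Heis p := ⟨0, 0, 1⟩

lemma c_eq_commutator : (c : Heis p) = b⁻¹ * a⁻¹ * b * a := by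
  simp [a, b, c]

end Heis

/-- The group `ℚ/ℤ` (realized as `AddCircle (1 : ℚ) = ℚ ⧸ ℤ`). -/
abbrev QZ := AddCircle (1 : ℚ)

namespace Heis

/-- The 2-cocycle `f₁` on `G = E_p(p³)` with values in `ℚ/ℤ` (trivial action):
`f₁(a^{s₁}b^{t₁}c^{u₁}, a^{s₂}b^{t₂}c^{u₂}) = (u₁s₂ + t₁·s₂(s₂−1)/2)/p mod ℤ`. -/
noncomputable def f₁ (p : ℕ) (g h : Heis p) : QZ :=
  (((g.u.val * h.s.val + g.t.val * (h.s.val * (h.s.val - 1) / 2) : ℕ) : ℚ) / (p : ℚ) : QZ)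

/-- The 2-cocycle `f₂` on `G = E_p(p³)` with values in `ℚ/ℤ` (trivial action):
`f₂(a^{s₁}b^{t₁}c^{u₁}, a^{s₂}b^{t₂}c^{u₂}) = (t₁(t₁−1)/2·s₂ + (t₁s₂ + u₁)t₂)/p mod ℤ`. -/
noncomputable def f₂ (p : ℕ) (g h : Heis p) : QZ :=
  (((g.t.val * (g.t.val - 1) / 2 * h.s.val + (g.t.val * h.s.val + g.u.val) * h.t.val : ℕ) : ℚ)
    / (p : ℚ) : QZ)

end Heis

/-- `f : K × K → A` is a 2-cocycle for the trivial action of the group `K` on the abelian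
group `A`: `f(g₁,g₂) + f(g₁g₂,g₃) = f(g₂,g₃) + f(g₁,g₂g₃)`. -/
def IsTwoCocycle {K : Type*} [Group K] {A : Type*} [AddCommGroup A] (f : K → K → A) : Prop :=
  ∀ g₁ g₂ g₃ : K, f g₁ g₂ + f (g₁ * g₂) g₃ = f g₂ g₃ + f g₁ (g₂ * g₃)

/-- `f : K × K → A` is a 2-coboundary for the trivial action of the group `K` on the abelian
group `A`: `f(g,h) = φ(h) − φ(gh) + φ(g)` for some `φ : K → A`. -/
def IsTwoCoboundary {K : Type*} [Group K] {A : Type*} [AddCommGroup A] (f : K → K → A) : Prop :=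
  ∃ φ : K → A, ∀ g h : K, f g h = φ h - φ (g * h) + φ g

/-!
Modulo coboundaries on `G`, the restriction of `f` to `Hᵢ' = {x | x.t = i·x.s}` is that of
`l·f₁ + m·f₂`, which on `Hᵢ'` is `1/p` times a polynomial in the coordinates. A coboundary is
symmetric on commuting pairs; on the pair `(a bⁱ, c)` the antisymmetrization of `l·f₁ + m·f₂` is
`(l + m i)/p`, which forces `m = −l i⁻¹`. Conversely, for `m = −l i⁻¹` the `u`-coordinates cancel
and the cocycle becomes `s₁s₂(A + B(s₁ + s₂))/p`, a function of the `s`-coordinate alone; it is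
the coboundary of a cubic in `s`, which descends to `ℤ/p` after a linear correction.
-/

section Coboundary

variable {K A : Type*} [Group K] [AddCommGroup A]

lemma IsTwoCoboundary.add {f g : K → K → A} (hf : IsTwoCoboundary f) (hg : IsTwoCoboundary g) :
    IsTwoCoboundary fun x y => f x y + g x y := by
  obtain ⟨φ, hφ⟩ := hf
  obtain ⟨ψ, hψ⟩ := hg
  exact ⟨φ + ψ, fun x y => by simp only [hφ, hψ, Pi.add_apply]; abel⟩

lemma IsTwoCoboundary.sub {f g : K → K → A} (hf : IsTwoCoboundary f) (hg : IsTwoCoboundary g) :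
    IsTwoCoboundary fun x y => f x y - g x y := by
  obtain ⟨φ, hφ⟩ := hf
  obtain ⟨ψ, hψ⟩ := hg
  exact ⟨φ - ψ, fun x y => by simp only [hφ, hψ, Pi.sub_apply]; abel⟩

lemma isTwoCoboundary_iff_of_isTwoCoboundary_sub {f g : K → K → A}
    (h : IsTwoCoboundary fun x y => f x y - g x y) : IsTwoCoboundary f ↔ IsTwoCoboundary g := by
  refine ⟨fun hf => ?_, fun hg => ?_⟩
  · simpa using hf.sub h
  · simpa using h.add hg

lemma IsTwoCoboundary.comp_monoidHom {K' : Type*} [Group K'] {f : K → K → A}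
    (hf : IsTwoCoboundary f) (φ : K' →* K) : IsTwoCoboundary fun x y => f (φ x) (φ y) := by
  obtain ⟨ψ, hψ⟩ := hf
  exact ⟨ψ ∘ φ, fun x y => by simp only [hψ, Function.comp_apply, map_mul]⟩

lemma IsTwoCoboundary.apply_comm {f : K → K → A} (hf : IsTwoCoboundary f) {x y : K}
    (hxy : Commute x y) : f x y = f y x := by
  obtain ⟨φ, hφ⟩ := hf
  rw [hφ, hφ, hxy.eq]
  abel

end Coboundary

namespace ZMod

variable {N : ℕ} [NeZero N]

noncomputable def toQZ : ZMod N →+ QZ :=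
  lift N ⟨AddMonoidHom.mk' (fun j ↦ ((j / N : ℚ) : QZ)) (by simp [add_div]),
    by simp⟩

lemma toQZ_intCast (j : ℤ) : toQZ (j : ZMod N) = ((j / N : ℚ) : QZ) := by
  simp [toQZ]

lemma toQZ_natCast (j : ℕ) : toQZ (j : ZMod N) = ((j / N : ℚ) : QZ) := by
  simpa using toQZ_intCast (N := N) j

lemma toQZ_injective : Function.Injective (toQZ : ZMod N → QZ) := by
  refine (injective_iff_map_eq_zero _).mpr fun j h => ?_
  have hN : (0 : ℚ) < N := Nat.cast_pos.mpr (NeZero.pos N)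
  rw [← natCast_zmod_val j, toQZ_natCast, AddCircle.coe_eq_zero_iff_of_mem_Ico] at h
  · rwa [div_eq_zero_iff, or_iff_left hN.ne', Nat.cast_eq_zero, val_eq_zero] at h
  · exact ⟨by positivity, by rw [div_lt_one hN]; exact_mod_cast val_lt j⟩

lemma val_nsmul_toQZ (l j : ZMod N) : l.val • toQZ j = toQZ (l * j) := by
  rw [← map_nsmul, nsmul_eq_mul, natCast_zmod_val]

lemma exists_toQZ_cubic_eq_coboundary (A B : ZMod N) :
    ∃ ψ : ZMod N → QZ, ∀ s t : ZMod N,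
      toQZ (s * t * (A + B * (s + t))) = ψ t - ψ (s + t) + ψ s := by
  have hN : (N : ℚ) ≠ 0 := NeZero.ne _
  -- `Ψ(S) = -(B S³ / 3 + A S² / 2)` up to the linear corrections, which make `Ψ/N` periodic mod `ℤ`
  let Ψ : ℤ → ℚ := fun S =>
    -(B.val * ((S : ℚ) ^ 3 - N ^ 2 * S) / 3 + A.val * ((S : ℚ) ^ 2 - N * S) / 2)
  have hcob (S T : ℤ) :
      Ψ T - Ψ (S + T) + Ψ S = ((S * T * (A.val + B.val * (S + T)) : ℤ) : ℚ) := by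
    simp only [Ψ]; push_cast; ring
  have hshift (S : ℤ) :
      Ψ (S + N) / N = Ψ S / N + ((-(B.val * (S ^ 2 + S * N) + A.val * S) : ℤ) : ℚ) := by
    simp only [Ψ]; push_cast; field_simp; ring
  let ψ : ℤ → QZ := fun S => ((Ψ S / N : ℚ) : QZ)
  have hper : Function.Periodic ψ N := fun S => by
    simp only [ψ]
    have hint (k : ℤ) : ((k : ℚ) : QZ) = 0 := (AddCircle.coe_eq_zero_iff 1).mpr ⟨k, zsmul_one k⟩
    rw [hshift, AddCircle.coe_add, hint, add_zero]
  refine ⟨fun s => ψ s.val, fun s t => ?_⟩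
  have hmod : ψ (s + t).val = ψ (s.val + t.val) := by
    rw [val_add, Int.natCast_mod, Int.emod_def, mul_comm]
    push_cast
    exact hper.sub_int_mul_eq _
  dsimp only
  rw [hmod]
  simp only [ψ, ← AddCircle.coe_sub, ← AddCircle.coe_add, ← sub_div, ← add_div, hcob,
    ← toQZ_intCast]
  push_cast
  simp only [natCast_val, cast_id', id]

end ZMod

namespace Heis

section Slope

variable {p : ℕ}

/-- For `k = i` this is `Hᵢ'`. -/
def slopeSubgroup (k : ZMod p) : Subgroup (Heis p) where
  carrier := {x | x.t = k * x.s}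
  mul_mem' {x y} hx hy := by
    change x.t + y.t = k * (x.s + y.s)
    rw [hx, hy, mul_add]
  one_mem' := (mul_zero k).symm
  inv_mem' {x} hx := by
    change -x.t = k * -x.s
    rw [hx, mul_neg]

lemma b_pow (n : ℕ) : (b : Heis p) ^ n = ⟨0, n, 0⟩ := by
  induction n with
  | zero => ext <;> simp
  | succ n ih => rw [pow_succ, ih]; ext <;> simp [b]

lemma a_mul_b_pow (n : ℕ) : (a * b ^ n : Heis p) = ⟨1, n, 0⟩ := by
  ext <;> simp [b_pow, a]

lemma closure_le_slopeSubgroup (n : ℕ) :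
    Subgroup.closure {a * b ^ n, c} ≤ slopeSubgroup (n : ZMod p) := by
  rw [Subgroup.closure_le, Set.insert_subset_iff, Set.singleton_subset_iff]
  refine ⟨?_, (mul_zero _).symm⟩
  rw [SetLike.mem_coe, a_mul_b_pow]
  exact (mul_one _).symm

lemma commute_c (x : Heis p) : Commute x c := by
  ext <;> simp [c, add_comm]

end Slope

variable {p : ℕ} [Fact p.Prime] [NeZero (2 : ZMod p)]

lemma f₁_eq_toQZ (g h : Heis p) :
    f₁ p g h = ZMod.toQZ (g.u * h.s + g.t * (h.s * (h.s - 1) / 2)) := by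
  rw [f₁, ← ZMod.toQZ_natCast, ← Nat.choose_two_right]
  push_cast [Nat.cast_choose_two]
  simp [ZMod.natCast_val]

lemma f₂_eq_toQZ (g h : Heis p) :
    f₂ p g h = ZMod.toQZ (g.t * (g.t - 1) / 2 * h.s + (g.t * h.s + g.u) * h.t) := by
  rw [f₂, ← ZMod.toQZ_natCast, ← Nat.choose_two_right]
  push_cast [Nat.cast_choose_two]
  simp [ZMod.natCast_val]

lemma add_mul_eq_zero_of_isTwoCoboundary {H : Subgroup (Heis p)} {n : ℕ} (hab : a * b ^ n ∈ H)
    (hc : c ∈ H) {l m : ZMod p}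
    (hcob : IsTwoCoboundary fun x y : H => l.val • f₁ p x y + m.val • f₂ p x y) :
    l + m * n = 0 := by
  have hsymm := hcob.apply_comm (x := ⟨_, hab⟩) (y := ⟨_, hc⟩) (Subtype.ext (commute_c _).eq)
  simp only [f₁_eq_toQZ, f₂_eq_toQZ, ZMod.val_nsmul_toQZ, ← map_add, a_mul_b_pow, c] at hsymm
  linear_combination -ZMod.toQZ_injective hsymm

lemma isTwoCoboundary_of_le_slopeSubgroup {H : Subgroup (Heis p)} {k : ZMod p}
    (hH : H ≤ slopeSubgroup k) {l m : ZMod p} (hlm : l + m * k = 0) :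
    IsTwoCoboundary fun x y : H => l.val • f₁ p x y + m.val • f₂ p x y := by
  obtain ⟨ψ, hψ⟩ := ZMod.exists_toQZ_cubic_eq_coboundary (l * (1 - k) / 2) (-(l * k / 2))
  refine ⟨fun x => ψ (x : Heis p).s, fun x y => ?_⟩
  have hx : (x : Heis p).t = k * (x : Heis p).s := hH x.2
  have hy : (y : Heis p).t = k * (y : Heis p).s := hH y.2
  simp only [f₁_eq_toQZ, f₂_eq_toQZ, ZMod.val_nsmul_toQZ, ← map_add, Subgroup.coe_mul, mul_def,
    ← hψ, hx, hy]
  congr 1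
  have h2 : (2 : ZMod p) * 2⁻¹ = 1 := mul_inv_cancel₀ two_ne_zero
  set s₁ := (x : Heis p).s
  set s₂ := (y : Heis p).s
  -- the `m`-part of the cocycle is `m k` times the first coefficient below, and `m k = -l`
  linear_combination (s₁ * s₂ * (k * s₁ - 1) / 2 + k * s₁ * s₂ ^ 2 + (x : Heis p).u * s₂) * hlm
    + l * s₂ ^ 2 * k * s₁ * h2

end Heis

theorem ker_restriction_Hᵢ'_general (p : ℕ) (hp : p.Prime) (hodd : Odd p)
    (i : ℕ) (hi1 : 1 ≤ i) (hi2 : i ≤ p - 1)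
    (f : Heis p → Heis p → QZ) (l m : ZMod p)
    (hlm : IsTwoCoboundary
      (fun g h => f g h - (l.val • Heis.f₁ p g h + m.val • Heis.f₂ p g h))) :
    IsTwoCoboundary
        (fun x y : (Subgroup.closure {Heis.a * Heis.b ^ i, Heis.c} : Subgroup (Heis p)) =>
          f (x : Heis p) (y : Heis p)) ↔ m = -l * (i : ZMod p)⁻¹ := by
  have := Fact.mk hp
  have : NeZero (2 : ZMod p) := ⟨Ring.two_ne_zero <| by
    rw [ZMod.ringChar_zmod_n]; rintro rfl; exact absurd hodd (by decide)⟩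
  have hi : (i : ZMod p) ≠ 0 := by
    rw [Ne, ZMod.natCast_eq_zero_iff]; exact Nat.not_dvd_of_pos_of_lt hi1 (by omega)
  have hm_iff : m = -l * (i : ZMod p)⁻¹ ↔ l + m * i = 0 := by
    rw [eq_mul_inv_iff_mul_eq₀ hi, eq_neg_iff_add_eq_zero, add_comm]
  set H := Subgroup.closure {Heis.a * Heis.b ^ i, Heis.c}
  refine (isTwoCoboundary_iff_of_isTwoCoboundary_sub
    (g := fun x y : H => l.val • Heis.f₁ p x y + m.val • Heis.f₂ p x y)
    (hlm.comp_monoidHom H.subtype)).trans ?_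
  rw [hm_iff]
  exact ⟨Heis.add_mul_eq_zero_of_isTwoCoboundary (H := H)
      (Subgroup.subset_closure (Set.mem_insert _ _))
      (Subgroup.subset_closure (Set.mem_insert_of_mem _ rfl)),
    Heis.isTwoCoboundary_of_le_slopeSubgroup (H := H) (Heis.closure_le_slopeSubgroup i)⟩

/-- For an odd prime `p`, `G = E_p(p³)`, `1 ≤ i ≤ p−1` and the subgroup
`Hᵢ' = ⟨a bⁱ, c⟩ ≅ (C_p)²`, the kernel of the restriction map `H²(G, ℚ/ℤ) → H²(Hᵢ', ℚ/ℤ)` is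
the cyclic group of order `p` generated by the class of `f₁ · f₂^{(−1)·i⁻¹}`: a class
`l·[f₁] + m·[f₂]` (and every class has this form) restricts to zero on `Hᵢ'` if and only if
`m = −l·i⁻¹` in `ℤ/pℤ`. -/
theorem ker_restriction_Hᵢ' (p : ℕ) (hp : p.Prime) (hodd : Odd p)
    (i : ℕ) (hi1 : 1 ≤ i) (hi2 : i ≤ p - 1)
    (f : Heis p → Heis p → QZ) (hf : IsTwoCocycle f) (l m : ZMod p)
    (hlm : IsTwoCoboundary
      (fun g h => f g h - (l.val • Heis.f₁ p g h + m.val • Heis.f₂ p g h))) :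
    IsTwoCoboundary
        (fun x y : (Subgroup.closure {Heis.a * Heis.b ^ i, Heis.c} : Subgroup (Heis p)) =>
          f (x : Heis p) (y : Heis p)) ↔ m = -l * (i : ZMod p)⁻¹ :=
  ker_restriction_Hᵢ'_general p hp hodd i hi1 hi2 f l m hlm
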